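/- Let G = (A ∪ B, E) be a connected bipartite graph with |A| = n₁, |B| = n₂ and |E| = m, and let I be the CHA instance whose switching graph (with respect to the popular matching M_φ corresponding to the empty matching of G) is the directed graph S constructed as follows: orient every edge of G from A to B with weight −1; for every u ∈ A add a new vertex u' and a directed edge u' → u of weight +1; every vertex of A' = {u' : u ∈ A} and of A is saturated, and every vertex of B is unsaturated with unsaturation degree 1 (so I has 2n₁ + n₂ houses and n₁ + m agents, each agent having a preference list of length 2 determined by the edge weights of S). Then the number of matchings of G (including the empty matching) equals the number of popular matchings of I. -/

import Mathlib

/-- A Capacitated House Allocation (CHA) instance: agents `A`, houses `H`, a capacity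
function `cap : H → ℤ_{>0}`, and for each agent a strict preference order (lower rank
means more preferred) over its adjacent houses, augmented with a unique last-resort
house `l(a)` of capacity `1` and lowest preference, appearing only on `a`'s list. -/
structure CHAInstance (A H : Type*) where
  adj : A → H → Prop
  rank : A → H → ℕ
  rank_strict : ∀ a h h', adj a h → adj a h' → rank a h = rank a h' → h = h'
  cap : H → ℕ
  cap_pos : ∀ h, 0 < cap h
  lastResort : A → H
  lastResort_injective : Function.Injective lastResort
  lastResort_adj : ∀ a, adj a (lastResort a)
  lastResort_worst : ∀ a h, adj a h → h ≠ lastResort a → rank a h < rank a (lastResort a)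
  lastResort_only : ∀ a a', adj a' (lastResort a) → a' = a
  lastResort_cap : ∀ a, cap (lastResort a) = 1

namespace CHAInstance

variable {A H : Type*}

/-- A matching of the CHA instance `I`: each agent is matched to at most one adjacent
house, and each house `h` is matched to at most `cap h` agents. -/
def IsMatching (I : CHAInstance A H) (M : Set (A × H)) : Prop :=
  (∀ p ∈ M, I.adj p.1 p.2) ∧ (∀ p ∈ M, ∀ q ∈ M, p.1 = q.1 → p = q) ∧
    (∀ h : H, {a | (a, h) ∈ M}.ncard ≤ I.cap h)

/-- Agent `a` prefers matching `M` to matching `M'`: `a` is matched in `M` and either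
unmatched in `M'`, or strictly prefers its house in `M` to its house in `M'`. -/
def Prefers (I : CHAInstance A H) (M M' : Set (A × H)) (a : A) : Prop :=
  ∃ h, (a, h) ∈ M ∧ ∀ h', (a, h') ∈ M' → I.rank a h < I.rank a h'

/-- `M` is more popular than `M'`. -/
def MorePopular [Fintype A] (I : CHAInstance A H) (M M' : Set (A × H)) : Prop :=
  Nat.card {a | Prefers I M M' a} > Nat.card {a | Prefers I M' M a}

/-- `M` is a popular matching of `I`. -/
def IsPopular [Fintype A] (I : CHAInstance A H) (M : Set (A × H)) : Prop :=
  I.IsMatching M ∧ ∀ M', I.IsMatching M' → ¬ MorePopular I M' M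

/-- `h = f(a)`: house `h` is the (unique) first choice of agent `a`. -/
def IsFirstChoice (I : CHAInstance A H) (a : A) (h : H) : Prop :=
  I.adj a h ∧ ∀ h', I.adj a h' → I.rank a h ≤ I.rank a h'

/-- `f(h)`: the set of agents whose first choice is `h`. -/
def fSet (I : CHAInstance A H) (h : H) : Set A := {a | IsFirstChoice I a h}

/-- `h` is an `f`-house if it is the first choice of some agent. -/
def IsFHouse (I : CHAInstance A H) (h : H) : Prop := ∃ a, IsFirstChoice I a h

/-- The defining condition for `s(a)`: `h` is not an `f`-house, or `h` is an `f`-house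
with `h ≠ f(a)` and `|f(h)| < c(h)`. -/
def SCond (I : CHAInstance A H) (a : A) (h : H) : Prop :=
  ¬ IsFHouse I h ∨ (¬ IsFirstChoice I a h ∧ (fSet I h).ncard < I.cap h)

/-- `h = s(a)`: house `h` is the highest-ranked house on `a`'s preference list
satisfying `SCond`. -/
def IsSecondChoice (I : CHAInstance A H) (a : A) (h : H) : Prop :=
  I.adj a h ∧ SCond I a h ∧ ∀ h', I.adj a h' → SCond I a h' → I.rank a h ≤ I.rank a h'

/-- The switching graph `G_M` of `I` with respect to a popular matching `M`:
`SwEdge I M a src tgt w` says that agent `a` contributes the directed edge from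
`src = M(a)` to `tgt`, the other element of `{f(a), s(a)}`, with weight
`w = -1` if `M(a) = f(a)` and `w = +1` otherwise. -/
def SwEdge (I : CHAInstance A H) (M : Set (A × H)) (a : A) (src tgt : H) (w : ℤ) :
    Prop :=
  (a, src) ∈ M ∧
    ((IsFirstChoice I a src ∧ IsSecondChoice I a tgt ∧ w = -1) ∨
     (IsSecondChoice I a src ∧ IsFirstChoice I a tgt ∧ w = 1))

/-- The unsaturation degree `u_M(h) = c(h) - |M(h)|` of a house `h`. -/
noncomputable def unsatDeg (I : CHAInstance A H) (M : Set (A × H)) (h : H) : ℕ :=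
  I.cap h - {a | (a, h) ∈ M}.ncard

/-- A house is saturated if its unsaturation degree is `0`. -/
def Saturated (I : CHAInstance A H) (M : Set (A × H)) (h : H) : Prop :=
  unsatDeg I M h = 0

end CHAInstance

section Reduction

variable {A B : Type*}

/-- The edges of the bipartite graph `G = (A ∪ B, E)`, as a type. -/
abbrev GraphEdges (Gadj : A → B → Prop) := {p : A × B // Gadj p.1 p.2}

/-- The agents of the CHA instance `I`: one agent per edge of `G` (the `-1` edges
`u → v` of `S`) and one agent per vertex `u ∈ A` (the `+1` edges `u' → u` of `S`). -/
abbrev ReductionAgents (Gadj : A → B → Prop) := GraphEdges Gadj ⊕ A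

/-- The houses of the CHA instance `I`: the primed copies `u'` of vertices of `A`, the
vertices of `A`, the vertices of `B`, and one last-resort house per agent. -/
abbrev ReductionHouses (Gadj : A → B → Prop) :=
  (A ⊕ (A ⊕ B)) ⊕ ReductionAgents Gadj

variable (Gadj : A → B → Prop)

/-- The house `u'` (primed copy of `u ∈ A`). -/
def housePrime (u : A) : ReductionHouses Gadj := Sum.inl (Sum.inl u)

/-- The house `u` for `u ∈ A`. -/
def houseA (u : A) : ReductionHouses Gadj := Sum.inl (Sum.inr (Sum.inl u))

/-- The house `v` for `v ∈ B`. -/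
def houseB (v : B) : ReductionHouses Gadj := Sum.inl (Sum.inr (Sum.inr v))

/-- `G`, viewed as a simple graph on `A ⊕ B` (used to state connectedness). -/
def GraphOfRel : SimpleGraph (A ⊕ B) :=
  SimpleGraph.fromRel (fun x y => ∃ u v, x = Sum.inl u ∧ y = Sum.inr v ∧ Gadj u v)

/-- A matching of the bipartite graph `G = (A ∪ B, E)`: a set of pairwise
vertex-disjoint edges. -/
def IsBipMatching (N : Set (A × B)) : Prop :=
  (∀ p ∈ N, Gadj p.1 p.2) ∧ (∀ p ∈ N, ∀ q ∈ N, p.1 = q.1 → p = q) ∧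
    (∀ p ∈ N, ∀ q ∈ N, p.2 = q.2 → p = q)

end Reduction

/-!
A matching `N` of `G` yields the CHA matching that sends the agent of an edge of `N` to its
`B`-house, the agent of a vertex left unmatched by `N` to its primed house, and every other
agent to its first choice; each house `u ∈ A` then holds exactly `deg u` of the `deg u + 1`
agents whose first choice it is. This matching is popular: an agent who gains in another
matching has moved into such a full house and pushed out one of its occupants, who loses.
Conversely, in a popular matching nobody sits at a last resort, and the house `u` is full as
soon as one of its `deg u + 1` agents is elsewhere, so exactly one of them takes its second
choice; the edges whose agents do so form a matching of `G`, and the two maps are inverse.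
-/

namespace CHAInstance

variable {A H : Type*} {I : CHAInstance A H} {M M' : Set (A × H)} {a b c : A} {h x y z : H}

theorem IsMatching.eq_of_mem (hM : I.IsMatching M) (hx : (a, x) ∈ M) (hy : (a, y) ∈ M) :
    x = y :=
  congrArg Prod.snd (hM.2.1 _ hx _ hy rfl)

theorem not_prefers_of_forall_mem (hsub : ∀ h, (a, h) ∈ M → (a, h) ∈ M') :
    ¬ I.Prefers M M' a :=
  fun ⟨h, hh, hlt⟩ => lt_irrefl _ (hlt h (hsub h hh))

theorem IsMatching.prefers_of_rank_lt (hM : I.IsMatching M) (hx : (a, x) ∈ M) (hy : (a, y) ∈ M')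
    (hlt : I.rank a y < I.rank a x) : I.Prefers M' M a :=
  ⟨y, hy, fun _ hx' => hM.eq_of_mem hx' hx ▸ hlt⟩

theorem IsMatching.not_prefers_of_rank_le (hM : I.IsMatching M) (hx : (a, x) ∈ M)
    (hy : (a, y) ∈ M') (hle : I.rank a y ≤ I.rank a x) : ¬ I.Prefers M M' a := by
  rintro ⟨h, hh, hlt⟩
  have := hlt y hy
  rw [hM.eq_of_mem hh hx] at this
  omega

def reassign (M : Set (A × H)) (a : A) (h : H) : Set (A × H) :=
  insert (a, h) {p ∈ M | p.1 ≠ a}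

theorem mem_reassign :
    (b, x) ∈ reassign M a h ↔ b = a ∧ x = h ∨ (b, x) ∈ M ∧ b ≠ a := by
  simp [reassign]

theorem mem_reassign_self : (a, h) ∈ reassign M a h :=
  Set.mem_insert _ _

theorem mem_reassign_of_ne (hb : b ≠ a) : (b, x) ∈ reassign M a h ↔ (b, x) ∈ M := by
  simp [mem_reassign, hb]

theorem isMatching_reassign [Finite A] (hM : I.IsMatching M) (hadj : I.adj a h)
    (hcap : {b | (b, h) ∈ M}.ncard < I.cap h) : I.IsMatching (reassign M a h) := by
  refine ⟨?_, ?_, fun x => ?_⟩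
  · rintro ⟨b, x⟩ hbx
    rcases mem_reassign.1 hbx with ⟨rfl, rfl⟩ | ⟨hbx, -⟩
    exacts [hadj, hM.1 _ hbx]
  · rintro ⟨b, x⟩ hbx ⟨b', x'⟩ hbx' (rfl : b = b')
    rcases mem_reassign.1 hbx with ⟨rfl, rfl⟩ | ⟨hbx, hb⟩ <;>
      rcases mem_reassign.1 hbx' with ⟨hba, rfl⟩ | ⟨hbx', hb'⟩
    exacts [rfl, absurd rfl hb', absurd hba hb, hM.2.1 _ hbx _ hbx' rfl]
  have hsub : {b | (b, x) ∈ reassign M a h} ⊆ insert a {b | (b, x) ∈ M} := fun b hb => by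
    rcases mem_reassign.1 hb with ⟨rfl, -⟩ | ⟨hb, -⟩
    exacts [Set.mem_insert _ _, Set.mem_insert_of_mem _ hb]
  obtain rfl | hx := eq_or_ne x h
  · calc _ ≤ (insert a {b | (b, x) ∈ M}).ncard := Set.ncard_le_ncard hsub
      _ ≤ {b | (b, x) ∈ M}.ncard + 1 := Set.ncard_insert_le _ _
      _ ≤ I.cap x := hcap
  · refine le_trans (Set.ncard_le_ncard fun b hb => ?_) (hM.2.2 x)
    rcases mem_reassign.1 hb with ⟨-, rfl⟩ | ⟨hb, -⟩
    exacts [absurd rfl hx, hb]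

theorem ncard_reassign_lt [Finite A] (hM : I.IsMatching M) (hmem : (a, x) ∈ M)
    (hne : x ≠ h) : {b | (b, x) ∈ reassign M a h}.ncard < I.cap x := by
  have hsub : {b | (b, x) ∈ reassign M a h} ⊆ {b | (b, x) ∈ M} := fun b hb => by
    rcases mem_reassign.1 hb with ⟨-, rfl⟩ | ⟨hb, -⟩
    exacts [absurd rfl hne, hb]
  have hssub : {b | (b, x) ∈ reassign M a h} ⊂ {b | (b, x) ∈ M} :=
    (Set.ssubset_iff_of_subset hsub).2 ⟨a, hmem, fun ha => by simp [mem_reassign, hne] at ha⟩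
  exact (Set.ncard_lt_ncard hssub).trans_le (hM.2.2 x)

variable [Fintype A]

theorem IsPopular.isMatching (hM : I.IsPopular M) : I.IsMatching M := hM.1

theorem IsPopular.cap_le_ncard (hM : I.IsPopular M) (hadj : I.adj a h)
    (hbetter : ∀ x, (a, x) ∈ M → I.rank a h < I.rank a x) :
    I.cap h ≤ {b | (b, h) ∈ M}.ncard := by
  by_contra! hcap
  refine hM.2 _ (isMatching_reassign hM.isMatching hadj hcap) ?_
  have hlose : {b | I.Prefers M (reassign M a h) b} = ∅ := by
    refine Set.eq_empty_of_forall_notMem fun b hb => ?_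
    obtain rfl | hba := eq_or_ne b a
    · obtain ⟨x, hx, hlt⟩ := hb
      exact lt_asymm (hlt h mem_reassign_self) (hbetter x hx)
    · exact not_prefers_of_forall_mem (fun x => (mem_reassign_of_ne hba).2) hb
  show Set.ncard _ > Set.ncard _
  rw [hlose, Set.ncard_empty, gt_iff_lt, Set.ncard_pos]
  exact ⟨a, h, mem_reassign_self, hbetter⟩

theorem IsPopular.exists_mem_of_better (hM : I.IsPopular M) (hadj : I.adj a h)
    (hbetter : ∀ x, (a, x) ∈ M → I.rank a h < I.rank a x) : ∃ b, (b, h) ∈ M :=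
  (Set.ncard_pos).1 ((I.cap_pos h).trans_le (hM.cap_le_ncard hadj hbetter))

theorem IsPopular.exists_mem (hM : I.IsPopular M) (a : A) : ∃ h, (a, h) ∈ M := by
  by_contra! hfree
  obtain ⟨b, hb⟩ :=
    hM.exists_mem_of_better (I.lastResort_adj a) fun x hx => absurd hx (hfree x)
  obtain rfl := I.lastResort_only a b (hM.isMatching.1 _ hb)
  exact hfree _ hb

/-- Moving `a` up to `b`'s house, `b` up to `c`'s house and `c` down to its last resort makes
two agents better off and one worse off. -/
theorem IsPopular.false_of_shift (hM : I.IsPopular M) (ha : (a, x) ∈ M) (hb : (b, y) ∈ M)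
    (hc : (c, z) ∈ M) (hca : c ≠ a) (hay : I.adj a y) (hbz : I.adj b z)
    (hya : I.rank a y < I.rank a x) (hzb : I.rank b z < I.rank b y)
    (hz : z ≠ I.lastResort c) : False := by
  have hab : a ≠ b := by
    rintro rfl
    exact (hM.isMatching.eq_of_mem ha hb ▸ hya).false
  have hcb : c ≠ b := by
    rintro rfl
    exact (hM.isMatching.eq_of_mem hb hc ▸ hzb).false
  have hzy : z ≠ y := by
    rintro rfl
    exact hzb.false
  have hlast : {d | (d, I.lastResort c) ∈ M} = ∅ := by
    refine Set.eq_empty_of_forall_notMem fun d hd => hz ?_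
    obtain rfl := I.lastResort_only c d (hM.isMatching.1 _ hd)
    exact hM.isMatching.eq_of_mem hc hd
  set M₁ := reassign M c (I.lastResort c)
  set M₂ := reassign M₁ b z
  set M₃ := reassign M₂ a y
  have hM₁ : I.IsMatching M₁ :=
    isMatching_reassign hM.isMatching (I.lastResort_adj c)
      (by rw [hlast, Set.ncard_empty]; exact I.cap_pos _)
  have hM₂ : I.IsMatching M₂ :=
    isMatching_reassign hM₁ hbz (ncard_reassign_lt hM.isMatching hc hz)
  have hM₃ : I.IsMatching M₃ :=
    isMatching_reassign hM₂ hay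
      (ncard_reassign_lt hM₁ ((mem_reassign_of_ne hcb.symm).2 hb) hzy.symm)
  have hbM₃ : (b, z) ∈ M₃ := (mem_reassign_of_ne hab.symm).2 mem_reassign_self
  have hwin : {a, b} ⊆ {d | I.Prefers M₃ M d} := by
    rintro d (rfl | rfl)
    exacts [hM.isMatching.prefers_of_rank_lt ha mem_reassign_self hya,
      hM.isMatching.prefers_of_rank_lt hb hbM₃ hzb]
  have hlose : {d | I.Prefers M M₃ d} ⊆ {c} := by
    intro d hd
    by_contra hdc
    obtain rfl | hda := eq_or_ne d a
    · exact hM.isMatching.not_prefers_of_rank_le ha mem_reassign_self hya.le hd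
    obtain rfl | hdb := eq_or_ne d b
    · exact hM.isMatching.not_prefers_of_rank_le hb hbM₃ hzb.le hd
    refine not_prefers_of_forall_mem (fun x hx => ?_) hd
    rwa [mem_reassign_of_ne hda, mem_reassign_of_ne hdb, mem_reassign_of_ne hdc]
  refine hM.2 M₃ hM₃ (lt_of_lt_of_le ?_ (Set.ncard_le_ncard hwin))
  calc Set.ncard _ ≤ ({c} : Set A).ncard := Set.ncard_le_ncard hlose
    _ < ({a, b} : Set A).ncard := by rw [Set.ncard_singleton, Set.ncard_pair hab]; omega

end CHAInstance

namespace ReductionAgents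

variable {A B : Type*} {Gadj : A → B → Prop} {N : Set (A × B)}

def vertex : ReductionAgents Gadj → A :=
  Sum.elim (fun e => e.1.1) id

/-- The paper's `f(a)`. -/
def firstHouse (a : ReductionAgents Gadj) : ReductionHouses Gadj :=
  houseA Gadj a.vertex

/-- The paper's `s(a)`. -/
def secondHouse : ReductionAgents Gadj → ReductionHouses Gadj :=
  Sum.elim (fun e => houseB Gadj e.1.2) (housePrime Gadj)

/-- The agents that the CHA matching corresponding to `N` sends to `s(a)`. -/
def IsDisplaced (N : Set (A × B)) : ReductionAgents Gadj → Prop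
  | Sum.inl e => e.1 ∈ N
  | Sum.inr u => ∀ v, (u, v) ∉ N

theorem firstHouse_ne_secondHouse (a b : ReductionAgents Gadj) :
    a.firstHouse ≠ b.secondHouse := by
  rcases b with e | u <;> simp [firstHouse, secondHouse, houseA, houseB, housePrime]

theorem firstHouse_ne_inr (a b : ReductionAgents Gadj) : a.firstHouse ≠ Sum.inr b := by
  simp [firstHouse, houseA]

theorem secondHouse_ne_inr (a b : ReductionAgents Gadj) : a.secondHouse ≠ Sum.inr b := by
  rcases a with e | u <;> simp [secondHouse, houseB, housePrime]

theorem firstHouse_eq_houseA {a : ReductionAgents Gadj} {u : A} :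
    a.firstHouse = houseA Gadj u ↔ a.vertex = u := by
  simp [firstHouse, houseA]

theorem eq_of_secondHouse_eq (hN : IsBipMatching Gadj N) {a b : ReductionAgents Gadj}
    (ha : a.IsDisplaced N) (hb : b.IsDisplaced N) (hab : a.secondHouse = b.secondHouse) :
    a = b := by
  rcases a with e | u <;> rcases b with e' | u' <;>
    simp only [secondHouse, Sum.elim_inl, Sum.elim_inr, houseB, housePrime, Sum.inl.injEq,
      Sum.inr.injEq, reduceCtorEq] at hab
  · exact congrArg Sum.inl (Subtype.ext (hN.2.2 _ ha _ hb hab))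
  · exact congrArg Sum.inr hab

theorem _root_.IsBipMatching.existsUnique_isDisplaced (hN : IsBipMatching Gadj N) (u : A) :
    ∃! a : ReductionAgents Gadj, a.vertex = u ∧ a.IsDisplaced N := by
  by_cases hu : ∃ v, (u, v) ∈ N
  · obtain ⟨v, huv⟩ := hu
    refine ⟨Sum.inl ⟨(u, v), hN.1 _ huv⟩, ⟨rfl, huv⟩, ?_⟩
    rintro (e | w) ⟨rfl, he⟩
    · exact congrArg Sum.inl (Subtype.ext (hN.2.1 _ he _ huv rfl))
    · exact absurd huv (he v)
  · push Not at hu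
    refine ⟨Sum.inr u, ⟨rfl, hu⟩, ?_⟩
    rintro (e | w) ⟨rfl, he⟩
    · exact absurd he (hu _)
    · rfl

end ReductionAgents

open ReductionAgents

section Reduction

variable {A B : Type*} {Gadj : A → B → Prop}
  {I : CHAInstance (ReductionAgents Gadj) (ReductionHouses Gadj)} {N : Set (A × B)}

structure IsReductionInstance (Gadj : A → B → Prop)
    (I : CHAInstance (ReductionAgents Gadj) (ReductionHouses Gadj)) : Prop where
  lastResort_eq : I.lastResort = Sum.inr
  adj_iff : ∀ a h, I.adj a h ↔ h = a.firstHouse ∨ h = a.secondHouse ∨ h = Sum.inr a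
  rank_firstHouse_lt : ∀ a, I.rank a a.firstHouse < I.rank a a.secondHouse
  cap_houseA : ∀ u, I.cap (houseA Gadj u) = {v | Gadj u v}.ncard
  cap_houseB : ∀ v, I.cap (houseB Gadj v) = 1

def toCHAMatching (Gadj : A → B → Prop) (N : Set (A × B)) :
    Set (ReductionAgents Gadj × ReductionHouses Gadj) :=
  {p | p.1.IsDisplaced N ∧ p.2 = p.1.secondHouse ∨
    ¬ p.1.IsDisplaced N ∧ p.2 = p.1.firstHouse}

def ofCHAMatching (M : Set (ReductionAgents Gadj × ReductionHouses Gadj)) : Set (A × B) :=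
  {q | ∃ hq : Gadj q.1 q.2, (Sum.inl ⟨q, hq⟩, houseB Gadj q.2) ∈ M}

theorem mem_toCHAMatching {a : ReductionAgents Gadj}
    {h : ReductionHouses Gadj} : (a, h) ∈ toCHAMatching Gadj N ↔
      a.IsDisplaced N ∧ h = a.secondHouse ∨ ¬ a.IsDisplaced N ∧ h = a.firstHouse :=
  Iff.rfl

theorem mem_toCHAMatching_secondHouse {a : ReductionAgents Gadj} :
    (a, a.secondHouse) ∈ toCHAMatching Gadj N ↔ a.IsDisplaced N := by
  have := firstHouse_ne_secondHouse a a
  rw [mem_toCHAMatching]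
  tauto

theorem mem_toCHAMatching_houseA {a : ReductionAgents Gadj} {u : A} :
    (a, houseA Gadj u) ∈ toCHAMatching Gadj N ↔ a.vertex = u ∧ ¬ a.IsDisplaced N := by
  have := firstHouse_ne_secondHouse (Sum.inr u) a
  simp only [mem_toCHAMatching, eq_comm (a := houseA Gadj u), firstHouse_eq_houseA]
  exact ⟨by tauto, fun h => Or.inr h.symm⟩

theorem mem_ofCHAMatching {M : Set (ReductionAgents Gadj × ReductionHouses Gadj)}
    {e : GraphEdges Gadj} :
    e.1 ∈ ofCHAMatching M ↔ (Sum.inl e, houseB Gadj e.1.2) ∈ M :=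
  ⟨fun ⟨_, h⟩ => h, fun h => ⟨e.2, h⟩⟩

theorem ofCHAMatching_toCHAMatching (hN : IsBipMatching Gadj N) :
    ofCHAMatching (toCHAMatching Gadj N) = N := by
  ext q
  exact ⟨fun ⟨_, h⟩ => mem_toCHAMatching_secondHouse.1 h,
    fun hq => ⟨hN.1 q hq, mem_toCHAMatching_secondHouse.2 hq⟩⟩

namespace IsReductionInstance

theorem adj_firstHouse (hI : IsReductionInstance Gadj I) (a : ReductionAgents Gadj) :
    I.adj a a.firstHouse :=
  (hI.adj_iff a _).2 (Or.inl rfl)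

theorem adj_secondHouse (hI : IsReductionInstance Gadj I) (a : ReductionAgents Gadj) :
    I.adj a a.secondHouse :=
  (hI.adj_iff a _).2 (Or.inr (Or.inl rfl))

theorem rank_secondHouse_lt (hI : IsReductionInstance Gadj I) (a : ReductionAgents Gadj) :
    I.rank a a.secondHouse < I.rank a (Sum.inr a) := by
  have := I.lastResort_worst a _ (hI.adj_secondHouse a)
  simp only [hI.lastResort_eq] at this
  exact this (secondHouse_ne_inr a a)

theorem rank_firstHouse_lt_of_adj (hI : IsReductionInstance Gadj I)
    {a : ReductionAgents Gadj} {h : ReductionHouses Gadj} (hadj : I.adj a h)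
    (hne : h ≠ a.firstHouse) : I.rank a a.firstHouse < I.rank a h := by
  rcases (hI.adj_iff a h).1 hadj with rfl | rfl | rfl
  · exact absurd rfl hne
  · exact hI.rank_firstHouse_lt a
  · exact (hI.rank_firstHouse_lt a).trans (hI.rank_secondHouse_lt a)

theorem eq_firstHouse_of_rank_lt (hI : IsReductionInstance Gadj I)
    {a : ReductionAgents Gadj} {h : ReductionHouses Gadj} (hadj : I.adj a h)
    (hlt : I.rank a h < I.rank a a.secondHouse) : h = a.firstHouse := by
  rcases (hI.adj_iff a h).1 hadj with rfl | rfl | rfl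
  · rfl
  · exact absurd hlt (lt_irrefl _)
  · exact absurd hlt (hI.rank_secondHouse_lt a).not_gt

theorem vertex_eq_of_adj_houseA (hI : IsReductionInstance Gadj I)
    {a : ReductionAgents Gadj} {u : A} (hadj : I.adj a (houseA Gadj u)) : a.vertex = u := by
  rcases (hI.adj_iff a _).1 hadj with h | h | h
  · exact firstHouse_eq_houseA.1 h.symm
  · exact absurd h (firstHouse_ne_secondHouse (Sum.inr u) a)
  · exact absurd h (firstHouse_ne_inr (Sum.inr u) a)

theorem secondHouse_eq_of_adj (hI : IsReductionInstance Gadj I)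
    {a b : ReductionAgents Gadj} (hadj : I.adj b a.secondHouse) :
    b.secondHouse = a.secondHouse := by
  rcases (hI.adj_iff b _).1 hadj with h | h | h
  · exact absurd h.symm (firstHouse_ne_secondHouse b a)
  · exact h.symm
  · exact absurd h (secondHouse_ne_inr a b)

/-- The agents of `u` are those of the `deg u` edges at `u` and the one of `u' → u`. -/
theorem ncard_fiber [Finite (ReductionAgents Gadj)] (hI : IsReductionInstance Gadj I) (u : A) :
    {a : ReductionAgents Gadj | a.vertex = u}.ncard = I.cap (houseA Gadj u) + 1 := by
  have hfiber : {a : ReductionAgents Gadj | a.vertex = u} =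
      insert (Sum.inr u) (Sum.inl '' {e | e.1.1 = u}) := by
    ext (e | w) <;> simp [vertex, eq_comm]
  rw [hfiber, Set.ncard_insert_of_notMem (by simp), Set.ncard_image_of_injective _
    Sum.inl_injective, hI.cap_houseA]
  congr 1
  exact Set.ncard_congr (fun e _ => e.1.2) (fun e he => he ▸ e.2)
    (fun e e' he he' h => Subtype.ext (Prod.ext (he.trans he'.symm) h))
    (fun v hv => ⟨⟨(u, v), hv⟩, rfl, rfl⟩)

theorem ncard_toCHAMatching_houseA [Finite (ReductionAgents Gadj)]
    (hI : IsReductionInstance Gadj I) (hN : IsBipMatching Gadj N) (u : A) :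
    {a | (a, houseA Gadj u) ∈ toCHAMatching Gadj N}.ncard = I.cap (houseA Gadj u) := by
  obtain ⟨d, hd, hd_unique⟩ := hN.existsUnique_isDisplaced u
  have hocc : {a | (a, houseA Gadj u) ∈ toCHAMatching Gadj N} = {a | a.vertex = u} \ {d} := by
    ext a
    simp only [Set.mem_ofPred_eq, mem_toCHAMatching_houseA, Set.mem_sdiff,
      Set.mem_singleton_iff]
    exact ⟨fun ⟨ha, hD⟩ => ⟨ha, fun had => hD (had ▸ hd.2)⟩,
      fun ⟨ha, had⟩ => ⟨ha, fun hD => had (hd_unique a ⟨ha, hD⟩)⟩⟩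
  rw [hocc, Set.ncard_sdiff_singleton_of_mem (s := {a : ReductionAgents Gadj | a.vertex = u})
    hd.1, hI.ncard_fiber, Nat.add_sub_cancel]

theorem isMatching_toCHAMatching [Finite (ReductionAgents Gadj)]
    (hI : IsReductionInstance Gadj I) (hN : IsBipMatching Gadj N) :
    I.IsMatching (toCHAMatching Gadj N) := by
  refine ⟨?_, ?_, fun h => ?_⟩
  · rintro ⟨a, h⟩ hp
    rcases mem_toCHAMatching.1 hp with ⟨-, rfl⟩ | ⟨-, rfl⟩
    exacts [hI.adj_secondHouse a, hI.adj_firstHouse a]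
  · rintro ⟨a, h⟩ hp ⟨_, h'⟩ hq (rfl : a = _)
    rcases mem_toCHAMatching.1 hp with ⟨hD, rfl⟩ | ⟨hD, rfl⟩ <;>
      rcases mem_toCHAMatching.1 hq with ⟨hD', rfl⟩ | ⟨hD', rfl⟩
    exacts [rfl, absurd hD hD', absurd hD' hD, rfl]
  by_cases hh : ∃ u, h = houseA Gadj u
  · obtain ⟨u, rfl⟩ := hh
    exact (hI.ncard_toCHAMatching_houseA hN u).le
  have hsecond : ∀ a, (a, h) ∈ toCHAMatching Gadj N →
      a.IsDisplaced N ∧ h = a.secondHouse := by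
    intro a ha
    rcases mem_toCHAMatching.1 ha with ha | ⟨-, rfl⟩
    exacts [ha, absurd ⟨_, rfl⟩ hh]
  refine le_trans ((Set.ncard_le_one_iff).2 fun {a b} ha hb => ?_) (I.cap_pos h)
  obtain ⟨haD, rfl⟩ := hsecond a ha
  obtain ⟨hbD, hab⟩ := hsecond b hb
  exact eq_of_secondHouse_eq hN haD hbD hab

theorem isDisplaced_of_prefers (hI : IsReductionInstance Gadj I) {M' : Set _}
    (hM' : I.IsMatching M') {a : ReductionAgents Gadj}
    (ha : I.Prefers M' (toCHAMatching Gadj N) a) :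
    a.IsDisplaced N ∧ (a, a.firstHouse) ∈ M' := by
  obtain ⟨h, hh, hlt⟩ := ha
  by_cases hD : a.IsDisplaced N
  · have := hI.eq_firstHouse_of_rank_lt (hM'.1 _ hh)
      (hlt _ (mem_toCHAMatching_secondHouse.2 hD))
    exact ⟨hD, this ▸ hh⟩
  · refine absurd (hlt _ (mem_toCHAMatching.2 (Or.inr ⟨hD, rfl⟩))) (not_lt.2 ?_)
    obtain rfl | hne := eq_or_ne h a.firstHouse
    exacts [le_rfl, (hI.rank_firstHouse_lt_of_adj (hM'.1 _ hh) hne).le]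

/-- `a` has moved into `f(a)`, which was full, and pushed one of its occupants out. -/
theorem exists_prefers_of_prefers [Finite (ReductionAgents Gadj)]
    (hI : IsReductionInstance Gadj I) (hN : IsBipMatching Gadj N) {M' : Set _}
    (hM' : I.IsMatching M') {a : ReductionAgents Gadj}
    (ha : I.Prefers M' (toCHAMatching Gadj N) a) :
    ∃ b, I.Prefers (toCHAMatching Gadj N) M' b ∧ b.vertex = a.vertex := by
  set M := toCHAMatching Gadj N
  obtain ⟨haD, haM'⟩ := hI.isDisplaced_of_prefers hM' ha
  obtain ⟨b, hbM, hbM'⟩ : ∃ b, (b, a.firstHouse) ∈ M ∧ (b, a.firstHouse) ∉ M' := by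
    by_contra! hsub
    have hfull : {b | (b, a.firstHouse) ∈ M}.ncard = I.cap a.firstHouse :=
      hI.ncard_toCHAMatching_houseA hN a.vertex
    have haM : a ∉ {b | (b, a.firstHouse) ∈ M} := fun h =>
      (mem_toCHAMatching_houseA.1 h).2 haD
    have hins : insert a {b | (b, a.firstHouse) ∈ M} ⊆ {b | (b, a.firstHouse) ∈ M'} :=
      Set.insert_subset haM' hsub
    have := Set.ncard_le_ncard hins
    rw [Set.ncard_insert_of_notMem haM] at this
    have := hM'.2.2 a.firstHouse
    omega
  have hb : b.firstHouse = a.firstHouse :=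
    firstHouse_eq_houseA.2 (mem_toCHAMatching_houseA.1 hbM).1
  refine ⟨b, ⟨_, hbM, fun h hh => ?_⟩, firstHouse_eq_houseA.1 hb⟩
  rw [← hb] at hbM' ⊢
  exact hI.rank_firstHouse_lt_of_adj (hM'.1 _ hh) (by rintro rfl; exact hbM' hh)

variable [Fintype (ReductionAgents Gadj)]

theorem isPopular_toCHAMatching (hI : IsReductionInstance Gadj I)
    (hN : IsBipMatching Gadj N) : I.IsPopular (toCHAMatching Gadj N) := by
  set M := toCHAMatching Gadj N
  refine ⟨hI.isMatching_toCHAMatching hN, fun M' hM' hmore => ?_⟩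
  have hinj : Set.InjOn vertex {a | I.Prefers M' M a} := fun a ha b hb hab =>
    (hN.existsUnique_isDisplaced b.vertex).unique ⟨hab, (hI.isDisplaced_of_prefers hM' ha).1⟩
      ⟨rfl, (hI.isDisplaced_of_prefers hM' hb).1⟩
  have himage : vertex '' {a | I.Prefers M' M a} ⊆ vertex '' {b | I.Prefers M M' b} := by
    rintro _ ⟨a, ha, rfl⟩
    obtain ⟨b, hb, hab⟩ := hI.exists_prefers_of_prefers hN hM' ha
    exact ⟨b, hb, hab⟩
  have := Set.ncard_le_ncard himage
  rw [hinj.ncard_image] at this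
  exact absurd (this.trans Set.ncard_image_le) (not_le.2 hmore)

variable {M : Set (ReductionAgents Gadj × ReductionHouses Gadj)}

/-- If `a` sits at its last resort, `s(a)` is full, say with `b`, and so is `f(b)`, say with
`c`; moving `a` to `s(a)`, `b` to `f(b)` and `c` to its last resort wins two votes for one. -/
theorem not_mem_lastResort (hI : IsReductionInstance Gadj I) (hM : I.IsPopular M)
    (a : ReductionAgents Gadj) : (a, Sum.inr a) ∉ M := by
  intro ha
  obtain ⟨b, hb⟩ := hM.exists_mem_of_better (hI.adj_secondHouse a) fun x hx => by
    rw [← hM.isMatching.eq_of_mem ha hx]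
    exact hI.rank_secondHouse_lt a
  have hrank : I.rank b b.firstHouse < I.rank b a.secondHouse := by
    rw [← hI.secondHouse_eq_of_adj (hM.isMatching.1 _ hb)]
    exact hI.rank_firstHouse_lt b
  obtain ⟨c, hc⟩ := hM.exists_mem_of_better (hI.adj_firstHouse b) fun x hx => by
    rwa [← hM.isMatching.eq_of_mem hb hx]
  refine hM.false_of_shift ha hb hc ?_ (hI.adj_secondHouse a) (hI.adj_firstHouse b)
    (hI.rank_secondHouse_lt a) hrank ?_
  · rintro rfl
    exact firstHouse_ne_inr b c (hM.isMatching.eq_of_mem hc ha)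
  · rw [hI.lastResort_eq]
    exact firstHouse_ne_inr b c

theorem mem_firstHouse_or_secondHouse (hI : IsReductionInstance Gadj I) (hM : I.IsPopular M)
    (a : ReductionAgents Gadj) : (a, a.firstHouse) ∈ M ∨ (a, a.secondHouse) ∈ M := by
  obtain ⟨h, hh⟩ := hM.exists_mem a
  rcases (hI.adj_iff a h).1 (hM.isMatching.1 _ hh) with rfl | rfl | rfl
  exacts [Or.inl hh, Or.inr hh, absurd hh (hI.not_mem_lastResort hM a)]

theorem cap_le_ncard_of_mem_secondHouse (hI : IsReductionInstance Gadj I)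
    (hM : I.IsPopular M) {b : ReductionAgents Gadj} (hb : (b, b.secondHouse) ∈ M) :
    I.cap b.firstHouse ≤ {a | (a, b.firstHouse) ∈ M}.ncard := by
  refine hM.cap_le_ncard (hI.adj_firstHouse b) fun x hx => ?_
  rw [← hM.isMatching.eq_of_mem hb hx]
  exact hI.rank_firstHouse_lt b

/-- The house of `u` holds at most `deg u` of the `deg u + 1` agents of `u`, and if one of them
is elsewhere the house is full. -/
theorem existsUnique_mem_secondHouse (hI : IsReductionInstance Gadj I) (hM : I.IsPopular M)
    (u : A) : ∃! a : ReductionAgents Gadj, a.vertex = u ∧ (a, a.secondHouse) ∈ M := by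
  have hSF : {a | (a, houseA Gadj u) ∈ M} ⊆ {a : ReductionAgents Gadj | a.vertex = u} :=
    fun a ha => hI.vertex_eq_of_adj_houseA (hM.isMatching.1 _ ha)
  have hF := hI.ncard_fiber u
  have hS := hM.isMatching.2.2 (houseA Gadj u)
  have hsecond : ∀ b : ReductionAgents Gadj, b.vertex = u → (b, houseA Gadj u) ∉ M →
      (b, b.secondHouse) ∈ M := by
    rintro b rfl hbS
    exact (hI.mem_firstHouse_or_secondHouse hM b).resolve_left hbS
  obtain ⟨a, haF, haS⟩ :
      ∃ a : ReductionAgents Gadj, a.vertex = u ∧ (a, houseA Gadj u) ∉ M := by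
    by_contra! hFS
    have := Set.ncard_le_ncard (s := {a : ReductionAgents Gadj | a.vertex = u})
      (t := {a | (a, houseA Gadj u) ∈ M}) hFS
    omega
  refine ⟨a, ⟨haF, hsecond a haF haS⟩, fun b ⟨hbF, hb⟩ => by_contra fun hba => ?_⟩
  have hfull : I.cap (houseA Gadj u) ≤ {a | (a, houseA Gadj u) ∈ M}.ncard := by
    subst hbF
    exact hI.cap_le_ncard_of_mem_secondHouse hM hb
  have hbS : b ∉ {a | (a, houseA Gadj u) ∈ M} := fun hbS => by
    subst hbF
    exact firstHouse_ne_secondHouse b b (hM.isMatching.eq_of_mem hbS hb)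
  have haS' : a ∉ insert b {a | (a, houseA Gadj u) ∈ M} := by
    rintro (h | h)
    exacts [hba h.symm, haS h]
  have hsub : insert a (insert b {c | (c, houseA Gadj u) ∈ M}) ⊆
      {c : ReductionAgents Gadj | c.vertex = u} :=
    Set.insert_subset haF (Set.insert_subset hbF hSF)
  have := Set.ncard_le_ncard hsub
  rw [Set.ncard_insert_of_notMem haS', Set.ncard_insert_of_notMem hbS] at this
  omega

theorem isDisplaced_ofCHAMatching_iff (hI : IsReductionInstance Gadj I) (hM : I.IsPopular M)
    (a : ReductionAgents Gadj) : a.IsDisplaced (ofCHAMatching M) ↔ (a, a.secondHouse) ∈ M := by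
  rcases a with e | u
  · exact mem_ofCHAMatching
  obtain ⟨d, ⟨hdu, hd⟩, hd_unique⟩ := hI.existsUnique_mem_secondHouse hM u
  constructor
  · intro hu
    rcases d with e | w
    · obtain rfl : e.1.1 = u := hdu
      exact absurd (mem_ofCHAMatching.2 hd) (hu e.1.2)
    · exact (show w = u from hdu) ▸ hd
  · intro hu v huv
    have := (hd_unique _ ⟨rfl, huv.2⟩).trans (hd_unique (Sum.inr u) ⟨rfl, hu⟩).symm
    exact Sum.inl_ne_inr this

theorem toCHAMatching_ofCHAMatching (hI : IsReductionInstance Gadj I) (hM : I.IsPopular M) :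
    toCHAMatching Gadj (ofCHAMatching M) = M := by
  ext ⟨a, h⟩
  rw [mem_toCHAMatching, hI.isDisplaced_ofCHAMatching_iff hM]
  have hfirst := (hI.mem_firstHouse_or_secondHouse hM a).resolve_right
  constructor
  · rintro (⟨ha, rfl⟩ | ⟨ha, rfl⟩)
    exacts [ha, hfirst ha]
  · intro hh
    by_cases ha : (a, a.secondHouse) ∈ M
    · exact Or.inl ⟨ha, hM.isMatching.eq_of_mem hh ha⟩
    · exact Or.inr ⟨ha, hM.isMatching.eq_of_mem hh (hfirst ha)⟩

theorem isBipMatching_ofCHAMatching (hI : IsReductionInstance Gadj I) (hM : I.IsPopular M) :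
    IsBipMatching Gadj (ofCHAMatching M) := by
  refine ⟨fun q hq => hq.1, fun p hp q hq hpq => ?_, fun p hp q hq hpq => ?_⟩
  · have := (hI.existsUnique_mem_secondHouse hM p.1).unique (y₁ := Sum.inl ⟨p, hp.1⟩)
      (y₂ := Sum.inl ⟨q, hq.1⟩) ⟨rfl, hp.2⟩ ⟨hpq.symm, hq.2⟩
    exact congrArg Subtype.val (Sum.inl_injective this)
  · have hcap := hM.isMatching.2.2 (houseB Gadj p.2)
    rw [hI.cap_houseB] at hcap
    have := (Set.ncard_le_one_iff).1 hcap hp.2 (hpq ▸ hq.2)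
    exact congrArg Subtype.val (Sum.inl_injective this)

def popularEquiv (hI : IsReductionInstance Gadj I) :
    {N // IsBipMatching Gadj N} ≃ {M // I.IsPopular M} where
  toFun N := ⟨toCHAMatching Gadj N, hI.isPopular_toCHAMatching N.2⟩
  invFun M := ⟨ofCHAMatching M.1, hI.isBipMatching_ofCHAMatching M.2⟩
  left_inv N := Subtype.ext (ofCHAMatching_toCHAMatching N.2)
  right_inv M := Subtype.ext (hI.toCHAMatching_ofCHAMatching M.2)

end IsReductionInstance

end Reduction

open CHAInstance in
/-- let `G = (A ∪ B, E)` be a connected bipartite graph, and let `I` be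
the CHA instance whose switching graph with respect to the popular matching `M_φ`
(corresponding to the empty matching of `G`) is the graph `S` obtained by orienting
every edge of `G` from `A` to `B` with weight `-1` and adding, for every `u ∈ A`, a new
vertex `u'` and a `+1` edge `u' → u`; every vertex of `A' ∪ A` is saturated and every
vertex of `B` is unsaturated with unsaturation degree `1`.  Concretely: `I` has houses
`A' ⊕ A ⊕ B` (plus last resorts) and one agent per edge of `S`; the agent of the `-1`
edge `u → v` has first choice `u` and second choice `v`, the agent of the `+1` edge
`u' → u` has first choice `u` and second choice `u'`; the capacities are
`c(u') = 1`, `c(u) = deg_G(u)` and `c(v) = 1`.  Then the number of matchings of `G`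
(including the empty one) equals the number of popular matchings of `I`. -/
theorem card_matchings_eq_card_popular
    {A B : Type*} [Fintype A] [Fintype B]
    (Gadj : A → B → Prop) [DecidablePred fun p : A × B => Gadj p.1 p.2]
    (hconn : (GraphOfRel Gadj).Connected)
    (I : CHAInstance (ReductionAgents Gadj) (ReductionHouses Gadj))
    (hlr : I.lastResort = Sum.inr)
    (hadjE : ∀ (e : GraphEdges Gadj) (h : ReductionHouses Gadj),
      I.adj (Sum.inl e) h ↔
        (h = houseA Gadj e.1.1 ∨ h = houseB Gadj e.1.2 ∨ h = Sum.inr (Sum.inl e)))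
    (hadjA : ∀ (u : A) (h : ReductionHouses Gadj),
      I.adj (Sum.inr u) h ↔
        (h = houseA Gadj u ∨ h = housePrime Gadj u ∨ h = Sum.inr (Sum.inr u)))
    (hrankE : ∀ e : GraphEdges Gadj,
      I.rank (Sum.inl e) (houseA Gadj e.1.1) < I.rank (Sum.inl e) (houseB Gadj e.1.2))
    (hrankA : ∀ u : A,
      I.rank (Sum.inr u) (houseA Gadj u) < I.rank (Sum.inr u) (housePrime Gadj u))
    (hcapPrime : ∀ u : A, I.cap (housePrime Gadj u) = 1)
    (hcapA : ∀ u : A, I.cap (houseA Gadj u) = {v : B | Gadj u v}.ncard)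
    (hcapB : ∀ v : B, I.cap (houseB Gadj v) = 1) :
    Nat.card {N : Set (A × B) // IsBipMatching Gadj N} =
      Nat.card {M : Set (ReductionAgents Gadj × ReductionHouses Gadj) //
        IsPopular I M} := by
  have hI : IsReductionInstance Gadj I :=
    { lastResort_eq := hlr
      adj_iff := by
        rintro (e | u) h
        exacts [hadjE e h, hadjA u h]
      rank_firstHouse_lt := by
        rintro (e | u)
        exacts [hrankE e, hrankA u]
      cap_houseA := hcapA
      cap_houseB := hcapB }
  exact Nat.card_congr hI.popularEquiv
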